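/- arXiv:2002.06336 — 2 statements merged into one kernel-verified Lean document; each statement's English description precedes it below -/
import Mathlib

section
/- The logarithmic map is the left inverse of the exponential map: for any x ∈ ℍⁿ_K and any nonzero tangent vector v ∈ T_x, the point y = exp_x(v) satisfies y ≠ x and log_x(y) = v. -/
open scoped BigOperators

/-- The Lorentz (Minkowski) inner product on `ℝ^{n+1}`:
`⟨x,y⟩_L = -x₀y₀ + Σ_{i=1}^n xᵢyᵢ`. -/
noncomputable def lorentz {n : ℕ} (x y : Fin (n + 1) → ℝ) : ℝ :=
  -(x 0 * y 0) + ∑ i : Fin n, x i.succ * y i.succ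

/-- Membership in the hyperboloid model `ℍⁿ_K` of curvature `K < 0`. -/
def onHyperboloid {n : ℕ} (K : ℝ) (x : Fin (n + 1) → ℝ) : Prop :=
  lorentz x x = 1 / K ∧ 0 < x 0

/-- The Lorentz norm `‖u‖_L = √⟨u,u⟩_L` (for vectors with `⟨u,u⟩_L ≥ 0`). -/
noncomputable def lnorm {n : ℕ} (u : Fin (n + 1) → ℝ) : ℝ :=
  Real.sqrt (lorentz u u)

/-- The inverse hyperbolic cosine `arccosh x = log (x + √(x² - 1))`. -/
noncomputable def arcosh (x : ℝ) : ℝ :=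
  Real.log (x + Real.sqrt (x ^ 2 - 1))

/-- The exponential map of the hyperboloid with generalized radius `R`:
`exp_x(v) = cosh(‖v‖_L/R)·x + sinh(‖v‖_L/R)·(R/‖v‖_L)·v`. -/
noncomputable def expMap {n : ℕ} (R : ℝ) (x v : Fin (n + 1) → ℝ) : Fin (n + 1) → ℝ :=
  Real.cosh (lnorm v / R) • x + (Real.sinh (lnorm v / R) * (R / lnorm v)) • v

/-- The logarithmic map of the hyperboloid of curvature `K`:
`log_x(y) = (arccosh α / √(α² − 1))·(y − αx)` with `α = K⟨x,y⟩_L`. -/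
noncomputable def logMap {n : ℕ} (K : ℝ) (x y : Fin (n + 1) → ℝ) : Fin (n + 1) → ℝ :=
  (arcosh (K * lorentz x y) / Real.sqrt ((K * lorentz x y) ^ 2 - 1)) •
    (y - (K * lorentz x y) • x)

/-- The hyperbolic distance `d(x,y) = R·arccosh(K⟨x,y⟩_L)`. -/
noncomputable def hdist {n : ℕ} (K R : ℝ) (x y : Fin (n + 1) → ℝ) : ℝ :=
  R * arcosh (K * lorentz x y)

/-- Parallel transport from `x` to `y` on the hyperboloid of generalized radius `R`:
`PT_{x→y}(v) = v + (⟨y,v⟩_L/(R² − ⟨x,y⟩_L))·(x+y)`. -/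
noncomputable def pt {n : ℕ} (R : ℝ) (x y v : Fin (n + 1) → ℝ) : Fin (n + 1) → ℝ :=
  v + (lorentz y v / (R ^ 2 - lorentz x y)) • (x + y)

/-- The origin `o = (R, 0, …, 0)` of the hyperboloid. -/
noncomputable def origin {n : ℕ} (R : ℝ) : Fin (n + 1) → ℝ :=
  fun i => if i = 0 then R else 0

lemma lorentz_smul_left' {n : ℕ} (a : ℝ) (x y : Fin (n + 1) → ℝ) :
    lorentz (a • x) y = a * lorentz x y := by
  simp only [lorentz, Pi.smul_apply, smul_eq_mul, mul_add, Finset.mul_sum, mul_assoc, mul_neg]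

lemma lorentz_add_left' {n : ℕ} (x x' y : Fin (n + 1) → ℝ) :
    lorentz (x + x') y = lorentz x y + lorentz x' y := by
  simp only [lorentz, Pi.add_apply, add_mul, Finset.sum_add_distrib]; ring

lemma lorentz_comm' {n : ℕ} (x y : Fin (n + 1) → ℝ) : lorentz x y = lorentz y x := by
  simp [lorentz, mul_comm]

lemma tangent_spacelike {n : ℕ} (K : ℝ) (hK : K < 0)
    (x : Fin (n + 1) → ℝ) (hx : onHyperboloid K x)
    (v : Fin (n + 1) → ℝ) (hv : lorentz v x = 0) (hv0 : v ≠ 0) :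
    0 < lorentz v v := by
  obtain ⟨hx1, hx0⟩ := hx
  set a := x 0 with ha
  set b := ∑ i : Fin n, x i.succ * x i.succ with hb
  set c := ∑ i : Fin n, v i.succ * v i.succ with hc
  set d := ∑ i : Fin n, v i.succ * x i.succ with hd
  have hcs : d ^ 2 ≤ c * b := by
    have := Finset.sum_mul_sq_le_sq_mul_sq Finset.univ (fun i : Fin n => v i.succ)
      (fun i : Fin n => x i.succ)
    calc d ^ 2 = (∑ i : Fin n, v i.succ * x i.succ) ^ 2 := by rw [hd]
      _ ≤ (∑ i : Fin n, v i.succ ^ 2) * ∑ i : Fin n, x i.succ ^ 2 := this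
      _ = c * b := by
          rw [hc, hb]; congr 1 <;> exact Finset.sum_congr rfl fun i _ => pow_two _
  have hcnn : 0 ≤ c := Finset.sum_nonneg fun i _ => mul_self_nonneg _
  have h1 : -(a * a) + b = 1 / K := hx1
  have h2 : -(v 0 * a) + d = 0 := hv
  have hcpos : 0 < c := by
    rcases hcnn.lt_or_eq with h | h
    · exact h
    · exfalso
      have hz : ∀ i : Fin n, v i.succ = 0 := by
        intro i
        have := Finset.sum_eq_zero_iff_of_nonneg (fun j _ => mul_self_nonneg (v (Fin.succ j)))
          |>.mp h.symm i (Finset.mem_univ i)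
        exact mul_self_eq_zero.mp this
      have hd0 : d = 0 := by rw [hd]; exact Finset.sum_eq_zero fun i _ => by rw [hz i, zero_mul]
      have hva : v 0 * a = 0 := by rw [hd0] at h2; linarith
      have hv00 : v 0 = 0 := (mul_eq_zero.mp hva).resolve_right (ne_of_gt hx0)
      apply hv0
      funext i
      refine Fin.cases hv00 (fun j => hz j) i
  have hgoal : lorentz v v = -(v 0 * v 0) + c := rfl
  rw [hgoal]
  have hd2 : d = v 0 * a := by linarith
  have hcK : c / K < 0 := div_neg_of_pos_of_neg hcpos hK
  have hb2 : b = 1 / K + a * a := by linarith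
  rw [hd2, hb2] at hcs
  have hcdiv : c * (1 / K) = c / K := by ring
  nlinarith [mul_pos hx0 hx0, sq_nonneg (v 0)]

/-- the logarithmic map is the left inverse of the exponential
map: for nonzero `v ∈ T_x`, the point `y = exp_x(v)` satisfies `y ≠ x` and
`log_x(y) = v`. -/
theorem logMap_expMap {n : ℕ} (K R : ℝ) (hK : K < 0)
    (hR : R = 1 / Real.sqrt (-K))
    (x : Fin (n + 1) → ℝ) (hx : onHyperboloid K x)
    (v : Fin (n + 1) → ℝ) (hv : lorentz v x = 0) (hv0 : v ≠ 0) :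
    expMap R x v ≠ x ∧ logMap K x (expMap R x v) = v := by
  have hvv : 0 < lorentz v v := tangent_spacelike K hK x hx v hv hv0
  have hKne : K ≠ 0 := ne_of_lt hK
  have hKneg : 0 < -K := neg_pos.mpr hK
  have hRpos : 0 < R := by rw [hR]; positivity
  set t := lnorm v with ht
  have htpos : 0 < t := Real.sqrt_pos.mpr hvv
  set s := t / R with hs
  have hspos : 0 < s := div_pos htpos hRpos
  have hshpos : 0 < Real.sinh s := Real.sinh_pos_iff.mpr hspos
  have hcs1 : 1 < Real.cosh s := Real.one_lt_cosh.mpr (ne_of_gt hspos)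
  set cf := Real.sinh s * (R / t) with hcf
  have hy : expMap R x v = Real.cosh s • x + cf • v := rfl
  have hvx : lorentz v x = 0 := hv
  have hxy : lorentz x (expMap R x v) = Real.cosh s / K := by
    rw [hy, lorentz_comm', lorentz_add_left', lorentz_smul_left', lorentz_smul_left',
      lorentz_comm' x x, hx.1, hvx]
    ring
  have halpha : K * lorentz x (expMap R x v) = Real.cosh s := by
    rw [hxy]; field_simp
  -- y ≠ x
  have hne : expMap R x v ≠ x := by
    intro h
    rw [h] at hxy
    rw [hx.1] at hxy
    have : Real.cosh s = 1 := by field_simp at hxy; linarith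
    linarith
  refine ⟨hne, ?_⟩
  -- the sqrt term
  have hsqrt : Real.sqrt (Real.cosh s ^ 2 - 1) = Real.sinh s := by
    rw [show Real.cosh s ^ 2 - 1 = Real.sinh s ^ 2 by rw [Real.cosh_sq']; ring]
    exact Real.sqrt_sq hshpos.le
  have harcosh : arcosh (Real.cosh s) = s := by
    rw [arcosh, hsqrt, Real.cosh_add_sinh, Real.log_exp]
  have hsub : expMap R x v - Real.cosh s • x = cf • v := by
    rw [hy]; abel
  rw [logMap, halpha, hsqrt, harcosh, hsub, smul_smul]
  have hcoef : s / Real.sinh s * cf = 1 := by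
    rw [hcf, hs]
    field_simp
  rw [hcoef, one_smul]
end

section
/- Jacobian determinant of the affine coupling layer: let d < n, let σ : ℝ → ℝ be differentiable with σ(r) > 0 for all r, and let s, t : ℝᵈ → ℝ^{n−d} be differentiable. Define f : ℝᵈ × ℝ^{n−d} → ℝᵈ × ℝ^{n−d} by f(x₁, x₂) = (x₁, x₂ ⊙ σ(s(x₁)) + t(x₁)). Then f is differentiable at every point (x₁, x₂), and the determinant of its (total) derivative there equals ∏_{i=1}^{n−d} σ(s(x₁))ᵢ. -/
/-
The layer fixes `x₁` and acts on `x₂` by an affine map depending on `x₁`, so its derivative is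
block lower triangular with the identity as the `x₁`-block. Its determinant is therefore that of
the `x₂`-block, the derivative of `x₂ ↦ x₂ ⊙ σ(s(x₁)) + t(x₁)`, which is the diagonal map with
entries `σ(s(x₁))ᵢ`.
-/

open scoped BigOperators

/-- The affine coupling layer `f(x₁,x₂) = (x₁, x₂ ⊙ σ(s(x₁)) + t(x₁))`. -/
def couplingLayer {n d : ℕ} (σ : ℝ → ℝ)
    (s t : (Fin d → ℝ) → (Fin (n - d) → ℝ)) :
    (Fin d → ℝ) × (Fin (n - d) → ℝ) → (Fin d → ℝ) × (Fin (n - d) → ℝ) :=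
  fun x => (x.1, fun i => x.2 i * σ (s x.1 i) + t x.1 i)

namespace LinearMap

variable {R M M' : Type*} [CommRing R] [AddCommGroup M] [Module R M] [AddCommGroup M']
  [Module R M'] [Module.Free R M] [Module.Finite R M] [Module.Free R M'] [Module.Finite R M']

theorem det_fst_prod (G : M × M' →ₗ[R] M') :
    ((fst R M M').prod G).det = (G ∘ₗ inr R M M').det := by
  classical
  let b := Module.Free.chooseBasis R M
  let b' := Module.Free.chooseBasis R M'
  have hmat : toMatrix (b.prod b') (b.prod b') ((fst R M M').prod G) =
      Matrix.fromBlocks 1 0 (toMatrix b b' (G ∘ₗ inl R M M'))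
        (toMatrix b' b' (G ∘ₗ inr R M M')) := by
    ext (i | i) (j | j) <;> simp [toMatrix_apply, Matrix.one_apply, Finsupp.single_apply, eq_comm]
  rw [← det_toMatrix (b.prod b'), hmat, Matrix.det_fromBlocks_zero₁₂, Matrix.det_one, one_mul,
    det_toMatrix]

end LinearMap

section

variable {𝕜 E F : Type*} [NontriviallyNormedField 𝕜] [NormedAddCommGroup E] [NormedSpace 𝕜 E]
  [FiniteDimensional 𝕜 E] [NormedAddCommGroup F] [NormedSpace 𝕜 F] [FiniteDimensional 𝕜 F]

theorem det_fderiv_fst_prodMk {g : E × F → F} {x : E × F} (hg : DifferentiableAt 𝕜 g x) :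
    (fderiv 𝕜 (fun p => (p.1, g p)) x).det = (fderiv 𝕜 (fun y => g (x.1, y)) x.2).det := by
  have hpartial : HasFDerivAt (fun y => g (x.1, y))
      ((fderiv 𝕜 g x).comp (ContinuousLinearMap.inr 𝕜 E F)) x.2 :=
    hg.hasFDerivAt.comp x.2 (hasFDerivAt_prodMk_right x.1 x.2)
  rw [(hasFDerivAt_fst.prodMk hg.hasFDerivAt).fderiv, hpartial.fderiv]
  exact LinearMap.det_fst_prod _

variable {ι : Type*} [Fintype ι]

theorem det_fderiv_mul_const_add_const (c b y : ι → 𝕜) :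
    (fderiv 𝕜 (fun y : ι → 𝕜 => fun i => y i * c i + b i) y).det = ∏ i, c i := by
  have hderiv : HasFDerivAt (fun y : ι → 𝕜 => fun i => y i * c i + b i)
      (ContinuousLinearMap.pi fun i => (c i • ContinuousLinearMap.id 𝕜 𝕜).comp
        (ContinuousLinearMap.proj i)) y := by
    refine hasFDerivAt_pi'' fun i => ?_
    simpa [mul_comm] using ((hasFDerivAt_apply i y).const_mul (c i)).add_const (b i)
  rw [hderiv.fderiv, ContinuousLinearMap.det_pi]
  simp

end

theorem couplingLayer_jacobian_det_general {n d : ℕ}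
    (σ : ℝ → ℝ) (hσ : Differentiable ℝ σ)
    (s t : (Fin d → ℝ) → (Fin (n - d) → ℝ))
    (hs : Differentiable ℝ s) (ht : Differentiable ℝ t)
    (x : (Fin d → ℝ) × (Fin (n - d) → ℝ)) :
    DifferentiableAt ℝ (couplingLayer (n := n) σ s t) x ∧
    (fderiv ℝ (couplingLayer (n := n) σ s t) x).det =
      ∏ i : Fin (n - d), σ (s x.1 i) := by
  have hg : DifferentiableAt ℝ
      (fun p : (Fin d → ℝ) × (Fin (n - d) → ℝ) => fun i => p.2 i * σ (s p.1 i) + t p.1 i) x := by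
    fun_prop
  refine ⟨differentiableAt_fst.prodMk hg, ?_⟩
  exact (det_fderiv_fst_prodMk hg).trans
    (det_fderiv_mul_const_add_const (fun i => σ (s x.1 i)) (t x.1) x.2)

/-- the affine coupling layer is differentiable everywhere
and the determinant of its total derivative at `(x₁,x₂)` is
`∏_{i} σ(s(x₁))ᵢ`. -/
theorem couplingLayer_jacobian_det {n d : ℕ} (hd : d < n)
    (σ : ℝ → ℝ) (hσpos : ∀ r : ℝ, 0 < σ r) (hσ : Differentiable ℝ σ)
    (s t : (Fin d → ℝ) → (Fin (n - d) → ℝ))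
    (hs : Differentiable ℝ s) (ht : Differentiable ℝ t)
    (x : (Fin d → ℝ) × (Fin (n - d) → ℝ)) :
    DifferentiableAt ℝ (couplingLayer (n := n) σ s t) x ∧
    (fderiv ℝ (couplingLayer (n := n) σ s t) x).det =
      ∏ i : Fin (n - d), σ (s x.1 i) :=
  couplingLayer_jacobian_det_general σ hσ s t hs ht x
end
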